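/- arXiv:2207.06221 — 2 statements merged into one kernel-verified Lean document; each statement's English description precedes it below -/
import Mathlib

section
/- In a bipartite graph, two neighborhood subgraphs S_u and S_i are subtree-isomorphic if and only if they are subgraph-isomorphic. -/
/-!
A bipartite graph is triangle-free, so the neighbours of a vertex form an independent set and
every edge of the closed neighbourhood of a vertex is incident to that vertex. Adjacency there is
therefore determined by which endpoint is the centre, so a bijection matching the centres
preserves it.
-/

namespace SimpleGraph

variable {V : Type*} {G : SimpleGraph V}

theorem IsBipartite.isIndepSet_neighborSet (hG : G.IsBipartite) (v : V) :
    G.IsIndepSet (G.neighborSet v) :=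
  G.isIndepSet_neighborSet_of_triangleFree (hG.cliqueFree (by norm_num : 2 < 3)) v

theorem adj_iff_of_mem_insert_neighborSet {x a b : V} (hx : G.IsIndepSet (G.neighborSet x))
    (ha : a ∈ insert x (G.neighborSet x)) (hb : b ∈ insert x (G.neighborSet x)) :
    G.Adj a b ↔ a ≠ b ∧ (a = x ∨ b = x) := by
  rcases ha with rfl | hxa <;> rcases hb with rfl | hxb
  · simp
  · exact iff_of_true hxb ⟨G.ne_of_adj hxb, .inl rfl⟩
  · exact iff_of_true hxa.symm ⟨(G.ne_of_adj hxa).symm, .inr rfl⟩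
  · refine iff_of_false (fun hab => hx hxa hxb (G.ne_of_adj hab) hab) ?_
    rintro ⟨-, rfl | rfl⟩
    exacts [G.irrefl hxa, G.irrefl hxb]

theorem adj_iff_adj_equiv_insert_neighborSet {u i : V} (hu : G.IsIndepSet (G.neighborSet u))
    (hi : G.IsIndepSet (G.neighborSet i))
    (h : (insert u (G.neighborSet u) : Set V) ≃ (insert i (G.neighborSet i) : Set V))
    (hui : (h ⟨u, Set.mem_insert u _⟩ : V) = i) (v₁ v₂ : (insert u (G.neighborSet u) : Set V)) :
    G.Adj v₁ v₂ ↔ G.Adj (h v₁) (h v₂) := by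
  have hcentre : ∀ v, (h v : V) = i ↔ (v : V) = u := fun v => by
    have hval : (h v : V) = i ↔ h v = h ⟨u, Set.mem_insert u _⟩ := by rw [Subtype.ext_iff, hui]
    rw [hval, h.apply_eq_iff_eq, Subtype.ext_iff]
  have hne : (h v₁ : V) ≠ h v₂ ↔ (v₁ : V) ≠ v₂ := by
    simp only [ne_eq, ← Subtype.ext_iff, h.apply_eq_iff_eq]
  rw [adj_iff_of_mem_insert_neighborSet hu v₁.2 v₂.2,
    adj_iff_of_mem_insert_neighborSet hi (h v₁).2 (h v₂).2, hne, hcentre, hcentre]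

end SimpleGraph

theorem subtree_iso_iff_subgraph_iso_of_bipartite_general {V F : Type*} (G : SimpleGraph V)
    (U I : Set V) (hdisj : Disjoint U I)
    (hbip : ∀ a b, G.Adj a b → (a ∈ U ∧ b ∈ I) ∨ (a ∈ I ∧ b ∈ U))
    (feat : ℕ → V → F) (u i : V) :
    (∃ h : (insert u (G.neighborSet u) : Set V) ≃ (insert i (G.neighborSet i) : Set V),
        (h ⟨u, Set.mem_insert u _⟩ : V) = i ∧
        ∀ (l : ℕ) (v : (insert u (G.neighborSet u) : Set V)), feat l v = feat l (h v)) ↔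
    (∃ h : (insert u (G.neighborSet u) : Set V) ≃ (insert i (G.neighborSet i) : Set V),
        (h ⟨u, Set.mem_insert u _⟩ : V) = i ∧
        (∀ (l : ℕ) (v : (insert u (G.neighborSet u) : Set V)), feat l v = feat l (h v)) ∧
        (∀ v₁ v₂ : (insert u (G.neighborSet u) : Set V),
          G.Adj v₁ v₂ ↔ G.Adj (h v₁) (h v₂))) := by
  have hG : G.IsBipartiteWith U I := ⟨hdisj, hbip⟩
  have hind := hG.isBipartite.isIndepSet_neighborSet
  constructor
  · rintro ⟨h, hui, hfeat⟩
    exact ⟨h, hui, hfeat, G.adj_iff_adj_equiv_insert_neighborSet (hind u) (hind i) h hui⟩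
  · rintro ⟨h, hui, hfeat, -⟩
    exact ⟨h, hui, hfeat⟩

/-- In a bipartite graph, two neighborhood subgraphs `S_u` (induced by `Ñ_u¹ = N_u¹ ∪ {u}`)
and `S_i` are subtree-isomorphic (a feature-preserving bijection `h : Ñ_u¹ → Ñ_i¹` with
`h(u) = i`) if and only if they are subgraph-isomorphic (the bijection moreover preserves
edges and non-edges of the induced subgraphs). -/
theorem subtree_iso_iff_subgraph_iso_of_bipartite {V F : Type*} (G : SimpleGraph V)
    (U I : Set V) (hcover : ∀ v, v ∈ U ∨ v ∈ I) (hdisj : Disjoint U I)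
    (hbip : ∀ a b, G.Adj a b → (a ∈ U ∧ b ∈ I) ∨ (a ∈ I ∧ b ∈ U))
    (feat : ℕ → V → F) (u i : V) :
    (∃ h : (insert u (G.neighborSet u) : Set V) ≃ (insert i (G.neighborSet i) : Set V),
        (h ⟨u, Set.mem_insert u _⟩ : V) = i ∧
        ∀ (l : ℕ) (v : (insert u (G.neighborSet u) : Set V)), feat l v = feat l (h v)) ↔
    (∃ h : (insert u (G.neighborSet u) : Set V) ≃ (insert i (G.neighborSet i) : Set V),
        (h ⟨u, Set.mem_insert u _⟩ : V) = i ∧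
        (∀ (l : ℕ) (v : (insert u (G.neighborSet u) : Set V)), feat l v = feat l (h v)) ∧
        (∀ v₁ v₂ : (insert u (G.neighborSet u) : Set V),
          G.Adj v₁ v₂ ↔ G.Adj (h v₁) (h v₂))) :=
  subtree_iso_iff_subgraph_iso_of_bipartite_general G U I hdisj hbip feat u i
end

section
/- There exist two rooted neighborhood subgraphs in a bipartite setting that are subgraph-isomorphic (hence indistinguishable by the 1-WL color refinement restricted to 1-hop trees) but not bipartite-subgraph-isomorphic: concretely, roots u and u' each with three neighbors carrying identical features such that in the first graph the three neighbors pairwise share no second-hop common neighbors while in the second graph two of them do; no feature-preserving bijection of the 2-hop neighborhoods preserving all edges exists. -/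
/-!
Take two copies of the star `K₁,₃`, rooted at `0` and `4`, and add a vertex `8` joined to two
leaves of the second star; with `{0, 4, 8}` on one side the graph is bipartite. Both closed
1-hop neighbourhoods are stars, matched by swapping the two copies. The 2-hop neighbourhood of
`0` is only its star (4 vertices), while that of `4` also contains `8` (5 vertices), so the two
are not even equinumerous.
-/

theorem SimpleGraph.dist_eq_two_iff {V : Type*} {G : SimpleGraph V} {u v : V} :
    G.dist u v = 2 ↔ u ≠ v ∧ ¬G.Adj u v ∧ (G.commonNeighbors u v).Nonempty := by
  rw [← G.edist_eq_two_iff, SimpleGraph.dist, ENat.toNat_eq_iff two_ne_zero]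
  rfl

namespace BipSubIso

open SimpleGraph Set

def edges : List (Fin 9 × Fin 9) :=
  [(0, 1), (0, 2), (0, 3), (4, 5), (4, 6), (4, 7), (8, 5), (8, 6)]

def graph : SimpleGraph (Fin 9) := fromRel fun a b => (a, b) ∈ edges

instance : DecidableRel graph.Adj :=
  inferInstanceAs (DecidableRel (fromRel fun a b => (a, b) ∈ edges).Adj)

def side : Set (Fin 9) := {0, 4, 8}

theorem adj_between_side_compl :
    ∀ a b, graph.Adj a b → (a ∈ side ∧ b ∈ sideᶜ) ∨ (a ∈ sideᶜ ∧ b ∈ side) := by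
  simp only [side, mem_compl_iff, mem_insert_iff, mem_singleton_iff]
  decide

theorem neighborSet_zero : graph.neighborSet 0 = {1, 2, 3} := by
  ext v
  simp only [mem_neighborSet, mem_insert_iff, mem_singleton_iff]
  revert v
  decide

theorem neighborSet_four : graph.neighborSet 4 = {5, 6, 7} := by
  ext v
  simp only [mem_neighborSet, mem_insert_iff, mem_singleton_iff]
  revert v
  decide

theorem twoHop_zero :
    insert 0 (graph.neighborSet 0) ∪ {v | graph.dist 0 v = 2} = {0, 1, 2, 3} := by
  ext v
  simp only [mem_union, mem_insert_iff, mem_neighborSet, mem_ofPred_eq, dist_eq_two_iff,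
    Set.Nonempty, mem_commonNeighbors, mem_singleton_iff]
  revert v
  decide

theorem twoHop_four :
    insert 4 (graph.neighborSet 4) ∪ {v | graph.dist 4 v = 2} = {4, 5, 6, 7, 8} := by
  ext v
  simp only [mem_union, mem_insert_iff, mem_neighborSet, mem_ofPred_eq, dist_eq_two_iff,
    Set.Nonempty, mem_commonNeighbors, mem_singleton_iff]
  revert v
  decide

theorem ncard_twoHop_zero_ne_ncard_twoHop_four :
    (insert 0 (graph.neighborSet 0) ∪ {v | graph.dist 0 v = 2}).ncard ≠
      (insert 4 (graph.neighborSet 4) ∪ {v | graph.dist 4 v = 2}).ncard := by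
  rw [twoHop_zero, twoHop_four, ncard_eq_toFinset_card', ncard_eq_toFinset_card']
  decide

def swapStars : Equiv.Perm (Fin 9) :=
  Function.Involutive.toPerm ![4, 5, 6, 7, 0, 1, 2, 3, 8] (by unfold Function.Involutive; decide)

theorem mem_star_zero_iff_swapStars_mem_star_four (x : Fin 9) :
    x ∈ insert 0 (graph.neighborSet 0) ↔ swapStars x ∈ insert 4 (graph.neighborSet 4) := by
  simp only [mem_insert_iff, mem_neighborSet]
  revert x
  decide

theorem adj_iff_swapStars_adj_on_star_zero :
    ∀ x ∈ insert 0 (graph.neighborSet 0), ∀ y ∈ insert 0 (graph.neighborSet 0),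
      graph.Adj x y ↔ graph.Adj (swapStars x) (swapStars y) := by
  simp only [mem_insert_iff, mem_neighborSet]
  decide

end BipSubIso

open BipSubIso SimpleGraph Set in
/-- There exist two rooted neighborhood subgraphs in a bipartite graph that are
subgraph-isomorphic (roots `u`, `u'`, each with three identically-featured neighbors;
in the first rooted subgraph the neighbors pairwise share no second-hop common neighbor
while in the second two of them do) but not bipartite-subgraph-isomorphic: no
feature-preserving bijection of the 2-hop neighborhoods preserving all edges exists. -/
theorem exists_subgraph_iso_not_bipartite_subgraph_iso :
    ∃ (V : Type) (_ : Fintype V) (G : SimpleGraph V) (U I : Set V) (feat : V → ℕ)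
      (u u' : V),
      (∀ v, v ∈ U ∨ v ∈ I) ∧ Disjoint U I ∧
      (∀ a b, G.Adj a b → (a ∈ U ∧ b ∈ I) ∨ (a ∈ I ∧ b ∈ U)) ∧
      -- each root has exactly three neighbors, all carrying identical features
      (G.neighborSet u).ncard = 3 ∧ (G.neighborSet u').ncard = 3 ∧
      (∀ v ∈ G.neighborSet u, ∀ w ∈ G.neighborSet u ∪ G.neighborSet u', feat v = feat w) ∧
      feat u = feat u' ∧
      -- neighbors of u pairwise share no second-hop common neighbor ...
      (∀ v ∈ G.neighborSet u, ∀ w ∈ G.neighborSet u, v ≠ w →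
        ∀ x, G.Adj v x → G.Adj w x → x = u) ∧
      -- ... while two neighbors of u' do
      (∃ v ∈ G.neighborSet u', ∃ w ∈ G.neighborSet u', v ≠ w ∧
        ∃ x, x ≠ u' ∧ G.Adj v x ∧ G.Adj w x) ∧
      -- S_u and S_{u'} are subgraph-isomorphic
      (∃ h : (insert u (G.neighborSet u) : Set V) ≃ (insert u' (G.neighborSet u') : Set V),
        (h ⟨u, Set.mem_insert u _⟩ : V) = u' ∧
        (∀ v : (insert u (G.neighborSet u) : Set V), feat v = feat (h v)) ∧
        (∀ v₁ v₂ : (insert u (G.neighborSet u) : Set V),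
          G.Adj v₁ v₂ ↔ G.Adj (h v₁) (h v₂))) ∧
      -- but S_u and S_{u'} are not bipartite-subgraph-isomorphic
      ¬ (∃ h : ((insert u (G.neighborSet u) ∪ {v | G.dist u v = 2}) : Set V) ≃
               ((insert u' (G.neighborSet u') ∪ {v | G.dist u' v = 2}) : Set V),
          (h ⟨u, Or.inl (Set.mem_insert u _)⟩ : V) = u' ∧
          (∀ v : ((insert u (G.neighborSet u) ∪ {v | G.dist u v = 2}) : Set V),
            feat v = feat (h v)) ∧
          (∀ v v' : ((insert u (G.neighborSet u) ∪ {v | G.dist u v = 2}) : Set V),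
            G.Adj v v' ↔ G.Adj (h v) (h v'))) := by
  refine ⟨Fin 9, inferInstance, graph, side, sideᶜ, fun _ => 0, 0, 4, fun v => em _,
    disjoint_compl_right, adj_between_side_compl, ?_, ?_, fun _ _ _ _ => rfl, rfl,
    ?_, ⟨5, (by decide : graph.Adj 4 5), 6, (by decide : graph.Adj 4 6), by decide,
      8, by decide, (by decide : graph.Adj 5 8), (by decide : graph.Adj 6 8)⟩,
    ⟨swapStars.subtypeEquiv mem_star_zero_iff_swapStars_mem_star_four, rfl, fun _ => rfl,
      fun x y => adj_iff_swapStars_adj_on_star_zero x x.2 y y.2⟩, ?_⟩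
  · rw [neighborSet_zero, ncard_eq_three]
    exact ⟨1, 2, 3, by decide, by decide, by decide, rfl⟩
  · rw [neighborSet_four, ncard_eq_three]
    exact ⟨5, 6, 7, by decide, by decide, by decide, rfl⟩
  · simp only [mem_neighborSet]
    decide
  · rintro ⟨h, -⟩
    refine ncard_twoHop_zero_ne_ncard_twoHop_four ?_
    simpa only [Nat.card_coe_set_eq] using Nat.card_congr h
end
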